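/- arXiv:2604.28023 — 3 statements merged into one kernel-verified Lean document; each statement's English description precedes it below -/
import Mathlib

section
/- Let χ : ℝ → ℂ be continuously differentiable, let b : ℝ → ℝ be continuously differentiable with b(r) > 0 for all r, and let γ : ℝ² → ℝ be continuously differentiable. Define a₀ : ℝ² → ℂ by a₀(t,r) = χ(r+t) · b(r)^{-1/4} · exp( −(1/2) ∫₀^t γ(τ, r+t−τ) dτ ). Then a₀ is differentiable and satisfies the transport equation ∂ₜ a₀(t,r) − ∂ᵣ a₀(t,r) + ( γ(t,r)/2 − b'(r)/(4 b(r)) ) a₀(t,r) = 0 for all (t,r) ∈ ℝ². -/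
/-!
On the lines `h ↦ (t + h, r - h)` the sum `r + t` is constant, and `∂ₜ - ∂ᵣ` is the derivative
along them. There `χ (r + t)` and the integrand `γ (τ, r + t - τ)` stay fixed, so only
`b (r - h) ^ (-1/4)` and the upper limit `t + h` of the integral move; they contribute
`b' / (4 b)` and `-γ / 2`. Joint differentiability of an integral with variable upper limit
follows by rescaling it to `[0, 1]` and differentiating under the integral sign.
-/

open MeasureTheory

section ParametricIntegral

variable {H E : Type*} [NormedAddCommGroup H] [NormedSpace ℝ H] [ProperSpace H]
  [NormedAddCommGroup E] [NormedSpace ℝ E]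

theorem differentiable_intervalIntegral_of_contDiff {F : H → ℝ → E}
    (hF : ContDiff ℝ 1 (Function.uncurry F)) (a b : ℝ) :
    Differentiable ℝ fun x => ∫ t in a..b, F x t := by
  intro x₀
  have hFd : Continuous (fderiv ℝ (Function.uncurry F)) := hF.continuous_fderiv one_ne_zero
  set F' : H → ℝ → H →L[ℝ] E := fun x t =>
    (fderiv ℝ (Function.uncurry F) (x, t)).comp (ContinuousLinearMap.inl ℝ H ℝ)
  have hF' : ∀ x t, HasFDerivAt (fun x => F x t) (F' x t) x := fun x t =>
    (hF.differentiable one_ne_zero (x, t)).hasFDerivAt.comp (f := fun e => (e, t)) x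
      (hasFDerivAt_prodMk_left x t)
  obtain ⟨C, hC⟩ := ((isCompact_closedBall x₀ 1).prod
    (isCompact_uIcc (a := a) (b := b))).exists_bound_of_continuousOn hFd.continuousOn
  have hF'_le : ∀ t ∈ Set.uIoc a b, ∀ x ∈ Metric.closedBall x₀ 1, ‖F' x t‖ ≤ C := by
    intro t ht x hx
    calc ‖F' x t‖ ≤ ‖fderiv ℝ (Function.uncurry F) (x, t)‖ * ‖ContinuousLinearMap.inl ℝ H ℝ‖ :=
          ContinuousLinearMap.opNorm_comp_le _ _
      _ ≤ ‖fderiv ℝ (Function.uncurry F) (x, t)‖ :=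
          mul_le_of_le_one_right (norm_nonneg _) (ContinuousLinearMap.norm_inl_le_one ℝ H ℝ)
      _ ≤ C := hC (x, t) ⟨hx, Set.uIoc_subset_uIcc ht⟩
  have hcont : Continuous (Function.uncurry F) := hF.continuous
  exact (intervalIntegral.hasFDerivAt_integral_of_dominated_of_fderiv_le (bound := fun _ => C)
    (Metric.closedBall_mem_nhds x₀ one_pos)
    (.of_forall fun x => (hcont.comp (Continuous.prodMk_right x)).aestronglyMeasurable)
    ((hcont.comp (Continuous.prodMk_right x₀)).intervalIntegrable a b)
    ((hFd.comp (Continuous.prodMk_right x₀)).clm_comp_const _).aestronglyMeasurable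
    (.of_forall hF'_le) intervalIntegrable_const
    (.of_forall fun t _ x _ => hF' x t)).differentiableAt

theorem differentiable_intervalIntegral_primitive_of_contDiff {F : H → ℝ → E}
    (hF : ContDiff ℝ 1 (Function.uncurry F)) (a : ℝ) :
    Differentiable ℝ fun p : H × ℝ => ∫ t in a..p.2, F p.1 t := by
  have hsubst : (fun p : H × ℝ => ∫ t in a..p.2, F p.1 t) =
      fun p => (p.2 - a) • ∫ s in (0 : ℝ)..1, F p.1 (a + (p.2 - a) * s) := by
    funext p
    simp
  have hG : ContDiff ℝ 1 (Function.uncurry fun (p : H × ℝ) s => F p.1 (a + (p.2 - a) * s)) :=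
    hF.comp (by fun_prop : ContDiff ℝ 1 fun q : (H × ℝ) × ℝ => (q.1.1, a + (q.1.2 - a) * q.2))
  rw [hsubst]
  exact (differentiable_snd.sub_const a).smul (differentiable_intervalIntegral_of_contDiff hG 0 1)

end ParametricIntegral

theorem deriv_fst_sub_deriv_snd {F : Type*} [NormedAddCommGroup F] [NormedSpace ℝ F]
    {f : ℝ × ℝ → F} {t r : ℝ} (hf : DifferentiableAt ℝ f (t, r)) :
    deriv (fun t' => f (t', r)) t - deriv (fun r' => f (t, r')) r =
      deriv (fun h => f (t + h, r - h)) 0 := by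
  have hL := hf.hasFDerivAt
  have ht : HasDerivAt (fun t' => f (t', r)) (fderiv ℝ f (t, r) (1, 0)) t :=
    hL.comp_hasDerivAt t ((hasDerivAt_id t).prodMk (hasDerivAt_const t r))
  have hr : HasDerivAt (fun r' => f (t, r')) (fderiv ℝ f (t, r) (0, 1)) r :=
    hL.comp_hasDerivAt r ((hasDerivAt_const r t).prodMk (hasDerivAt_id r))
  have hc : HasDerivAt (fun h => f (t + h, r - h)) (fderiv ℝ f (t, r) (1, -1)) 0 :=
    hL.comp_hasDerivAt_of_eq 0
      (((hasDerivAt_id 0).const_add t).prodMk ((hasDerivAt_id 0).const_sub r)) (by simp)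
  rw [ht.deriv, hr.deriv, hc.deriv, ← map_sub]
  simp

noncomputable def principalAmplitude (χ : ℝ → ℂ) (b : ℝ → ℝ) (γ : ℝ × ℝ → ℝ) (p : ℝ × ℝ) : ℂ :=
  χ (p.2 + p.1) * ↑(b p.2 ^ (-(1/4 : ℝ)))
    * Complex.exp (-(1/2 : ℂ) * ↑(∫ τ in (0:ℝ)..p.1, γ (τ, p.2 + p.1 - τ)))

variable {χ : ℝ → ℂ} {b : ℝ → ℝ} {γ : ℝ × ℝ → ℝ}

theorem differentiable_principalAmplitude (hχ : Differentiable ℝ χ) (hb : Differentiable ℝ b)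
    (hbpos : ∀ r, 0 < b r) (hγ : ContDiff ℝ 1 γ) :
    Differentiable ℝ (principalAmplitude χ b γ) := by
  have hI : Differentiable ℝ fun p : ℝ × ℝ => ∫ τ in (0:ℝ)..p.1, γ (τ, p.2 + p.1 - τ) :=
    (differentiable_intervalIntegral_primitive_of_contDiff (F := fun s τ => γ (τ, s - τ))
      (hγ.comp (by fun_prop)) 0).comp
      (by fun_prop : Differentiable ℝ fun p : ℝ × ℝ => (p.2 + p.1, p.1))
  have hc : Differentiable ℝ fun p : ℝ × ℝ => b p.2 ^ (-(1/4 : ℝ)) :=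
    (hb.comp differentiable_snd).rpow_const fun p => Or.inl (hbpos p.2).ne'
  unfold principalAmplitude
  fun_prop

theorem hasDerivAt_principalAmplitude_characteristic {t r : ℝ} (hb : DifferentiableAt ℝ b r)
    (hbpos : 0 < b r) (hγ : Continuous γ) :
    HasDerivAt (fun h => principalAmplitude χ b γ (t + h, r - h))
      ((↑(deriv b r) / (4 * ↑(b r)) - ↑(γ (t, r)) / 2) * principalAmplitude χ b γ (t, r)) 0 := by
  have hI : HasDerivAt (fun h => ∫ τ in (0:ℝ)..t + h, γ (τ, r + t - τ)) (γ (t, r)) 0 := by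
    have := ((hγ.comp (by fun_prop : Continuous fun τ => (τ, r + t - τ))).integral_hasStrictDerivAt
      0 (t + 0)).hasDerivAt.comp_const_add t 0
    simpa using this
  have hc : HasDerivAt (fun h => b (r - h) ^ (-(1/4 : ℝ)))
      (-deriv b r * (-(1/4)) * b r ^ (-(1/4 : ℝ) - 1)) 0 := by
    have hb' : HasDerivAt b (deriv b r) (r - 0) := by simpa using hb.hasDerivAt
    simpa using (hb'.comp_const_sub r 0).rpow_const (p := -(1/4 : ℝ))
      (Or.inl (by simpa using hbpos.ne'))
  have hshift : ∀ h : ℝ, r - h + (t + h) = r + t := fun h => by ring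
  simp only [principalAmplitude, hshift]
  refine ((hc.ofReal_comp.const_mul (χ (r + t))).mul
    (hI.ofReal_comp.const_mul (-(1/2 : ℂ))).cexp).congr_deriv ?_
  rw [add_zero, sub_zero, Real.rpow_sub hbpos, Real.rpow_one]
  have hb0 : (b r : ℂ) ≠ 0 := by exact_mod_cast hbpos.ne'
  push_cast
  field_simp
  ring

/-- The explicit principal amplitude
`a₀(t,r) = χ(r+t) b(r)^{-1/4} exp(-(1/2)∫₀^t γ(τ, r+t-τ) dτ)` solves the transport
equation `∂ₜa₀ - ∂ᵣa₀ + (γ/2 - b'/(4b)) a₀ = 0`. -/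
theorem principal_amplitude_transport
    (χ : ℝ → ℂ) (b : ℝ → ℝ) (γ : ℝ × ℝ → ℝ)
    (hχ : ContDiff ℝ 1 χ) (hb : ContDiff ℝ 1 b) (hbpos : ∀ r, 0 < b r)
    (hγ : ContDiff ℝ 1 γ)
    (a₀ : ℝ × ℝ → ℂ)
    (ha₀ : ∀ t r : ℝ, a₀ (t, r)
      = χ (r + t) * (↑(b r ^ (-(1/4 : ℝ))) : ℂ)
          * Complex.exp (-(1/2 : ℂ) * ↑(∫ τ in (0:ℝ)..t, γ (τ, r + t - τ)))) :
    Differentiable ℝ a₀ ∧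
    ∀ t r : ℝ,
      deriv (fun t' => a₀ (t', r)) t - deriv (fun r' => a₀ (t, r')) r
        + ((↑(γ (t, r)) / 2 - ↑(deriv b r) / (4 * ↑(b r))) : ℂ) * a₀ (t, r) = 0 := by
  obtain rfl : a₀ = principalAmplitude χ b γ := funext fun p => ha₀ p.1 p.2
  have hbd := hb.differentiable one_ne_zero
  have hdiff := differentiable_principalAmplitude (hχ.differentiable one_ne_zero) hbd hbpos hγ
  refine ⟨hdiff, fun t r => ?_⟩
  rw [deriv_fst_sub_deriv_snd (hdiff (t, r)),
    (hasDerivAt_principalAmplitude_characteristic (hbd r) (hbpos r) hγ.continuous).deriv]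
  ring
end

section
/- Let f : ℝ → ℂ be Lebesgue integrable with compact support. If there exists ε > 0 such that ∫_ℝ e^{−iλt} f(t) dt = 0 for every real λ with |λ| < ε, then f = 0 almost everywhere on ℝ. -/
/-!
Since `f` has compact support, `λ ↦ ∫ e^{-iλt} f(t) dt` extends to an entire function of `λ ∈ ℂ`;
vanishing on a real interval, it vanishes identically by the identity theorem. So the Fourier
transform of `f` is zero, and by self-duality `∫ (𝓕 ψ) f = ∫ ψ (𝓕 f) = 0` for every Schwartz
function `ψ`. Every smooth compactly supported test function is of the form `𝓕 ψ`, hence `f = 0`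
almost everywhere.
-/

open MeasureTheory Complex Filter Topology Metric
open scoped FourierTransform ContDiff SchwartzMap

section FourierInjective

variable {V E : Type*} [NormedAddCommGroup V] [InnerProductSpace ℝ V] [FiniteDimensional ℝ V]
  [MeasurableSpace V] [BorelSpace V] [NormedAddCommGroup E] [NormedSpace ℂ E] [CompleteSpace E]

theorem Real.integral_fourier_smul_eq {g : V → ℂ} {f : V → E} (hg : Integrable g)
    (hf : Integrable f) : ∫ ξ, 𝓕 g ξ • f ξ = ∫ x, g x • 𝓕 f x := by
  simpa using! VectorFourier.integral_fourierIntegral_smul_eq_flip (L := innerₗ V)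
    Real.continuous_fourierChar continuous_inner hg hf

theorem MeasureTheory.Integrable.ae_eq_zero_of_fourier_eq_zero {f : V → E} (hf : Integrable f)
    (h : 𝓕 f = 0) : f =ᵐ[volume] 0 := by
  refine ae_eq_zero_of_integral_contDiff_smul_eq_zero hf.locallyIntegrable fun g hg hgs ↦ ?_
  let φ : 𝓢(V, ℂ) := (hgs.comp_left ofReal_zero).toSchwartzMap (ofRealCLM.contDiff.comp hg)
  calc ∫ x, g x • f x = ∫ x, φ x • f x := by congr with x
    _ = ∫ x, 𝓕 ⇑(𝓕⁻ φ : 𝓢(V, ℂ)) x • f x := by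
        simp [← SchwartzMap.fourier_coe]
    _ = 0 := by simp [Real.integral_fourier_smul_eq (𝓕⁻ φ : 𝓢(V, ℂ)).integrable hf, h]

end FourierInjective

section FourierLaplace

variable {E : Type*} [NormedAddCommGroup E] [NormedSpace ℂ E]

theorem Differentiable.eq_zero_of_forall_abs_lt [CompleteSpace E] {g : ℂ → E}
    (hg : Differentiable ℂ g) {ε : ℝ} (hε : 0 < ε) (h : ∀ x : ℝ, |x| < ε → g x = 0) : g = 0 := by
  have hreal : ∀ᶠ x : ℝ in 𝓝[≠] 0, g x = 0 := by
    filter_upwards [mem_nhdsWithin_of_mem_nhds (ball_mem_nhds 0 hε)] with x hx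
    exact h x (by simpa using hx)
  have hofReal : Tendsto ((↑) : ℝ → ℂ) (𝓝[≠] 0) (𝓝[≠] 0) :=
    continuous_ofReal.continuousWithinAt.tendsto_nhdsWithin fun _ hx ↦ by simpa using hx
  have hfreq : ∃ᶠ z in 𝓝[≠] (0 : ℂ), g z = 0 := hofReal.frequently hreal.frequently
  have hanalytic : AnalyticOnNhd ℂ g Set.univ := fun z _ ↦ hg.analyticAt z
  funext z
  exact hanalytic.eqOn_zero_of_preconnected_of_frequently_eq_zero isPreconnected_univ
    (Set.mem_univ 0) hfreq (Set.mem_univ z)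

noncomputable def fourierLaplace (f : ℝ → E) (z : ℂ) : E := ∫ t : ℝ, cexp (-(I * z * t)) • f t

theorem norm_cexp_neg_I_mul_mul_le (z : ℂ) (t : ℝ) :
    ‖cexp (-(I * z * t))‖ ≤ Real.exp (‖z‖ * |t|) := by
  rw [norm_exp]
  gcongr
  calc (-(I * z * t)).re = z.im * t := by simp
    _ ≤ |z.im * t| := le_abs_self _
    _ ≤ ‖z‖ * |t| := by rw [abs_mul]; gcongr; exact abs_im_le_norm z

theorem hasDerivAt_cexp_neg_I_mul_mul (z : ℂ) (t : ℝ) :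
    HasDerivAt (fun z ↦ cexp (-(I * z * t))) (-(I * t) * cexp (-(I * z * t))) z := by
  have := (((hasDerivAt_id z).const_mul I).mul_const (t : ℂ)).neg.cexp
  simp only [id, mul_one] at this
  rwa [mul_comm] at this

theorem norm_neg_I_mul_mul_cexp_le {z : ℂ} {t r R : ℝ} (hz : ‖z‖ ≤ r) (ht : |t| ≤ R) :
    ‖-(I * t) * cexp (-(I * z * t))‖ ≤ R * Real.exp (r * R) := by
  rw [norm_mul, norm_neg, norm_mul, norm_I, one_mul, norm_real, Real.norm_eq_abs]
  gcongr
  · exact (abs_nonneg t).trans ht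
  · exact (norm_cexp_neg_I_mul_mul_le z t).trans (by gcongr; exact (norm_nonneg z).trans hz)

theorem differentiable_fourierLaplace [CompleteSpace E] {f : ℝ → E} (hf : Integrable f)
    (hsupp : HasCompactSupport f) : Differentiable ℂ (fourierLaplace f) := by
  intro z₀
  obtain ⟨R, hR⟩ := hsupp.isBounded.subset_closedBall 0
  have hmeas (z : ℂ) : AEStronglyMeasurable (fun t : ℝ ↦ cexp (-(I * z * t)) • f t) :=
    (Continuous.aestronglyMeasurable (by fun_prop)).smul hf.1
  have hbound : ∀ t : ℝ, ∀ z ∈ ball z₀ 1,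
      ‖(-(I * t) * cexp (-(I * z * t))) • f t‖ ≤ R * Real.exp ((‖z₀‖ + 1) * R) * ‖f t‖ := by
    intro t z hz
    by_cases ht : t ∈ tsupport f
    · have htR : |t| ≤ R := by simpa using hR ht
      have hzr : ‖z‖ ≤ ‖z₀‖ + 1 :=
        (norm_le_norm_add_norm_sub' z z₀).trans (by gcongr; exact (mem_ball_iff_norm.mp hz).le)
      rw [norm_smul]
      gcongr
      exact norm_neg_I_mul_mul_cexp_le hzr htR
    · simp [image_eq_zero_of_notMem_tsupport ht]
  have hint : Integrable (fun t : ℝ ↦ cexp (-(I * z₀ * t)) • f t) :=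
    (integrableOn_iff_integrable_of_support_subset
      ((Function.support_smul_subset_right _ _).trans (subset_tsupport f))).mp
      (hf.integrableOn.continuousOn_smul (by fun_prop) hsupp)
  have key := hasDerivAt_integral_of_dominated_loc_of_deriv_le (ball_mem_nhds z₀ one_pos)
    (Eventually.of_forall hmeas) hint
    (F' := fun z t ↦ (-(I * t) * cexp (-(I * z * t))) • f t)
    ((Continuous.aestronglyMeasurable (by fun_prop)).smul hf.1)
    (Eventually.of_forall hbound) (hf.norm.const_mul _)
    (Eventually.of_forall fun t z _ ↦ (hasDerivAt_cexp_neg_I_mul_mul z t).smul_const (f t))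
  exact key.2.differentiableAt

theorem Real.fourier_eq_fourierLaplace (f : ℝ → E) (w : ℝ) :
    𝓕 f w = fourierLaplace f (2 * Real.pi * w) := by
  rw [Real.fourier_real_eq_integral_exp_smul, fourierLaplace]
  congr with t
  push_cast
  ring_nf

end FourierLaplace

/-- A compactly supported integrable function whose Fourier transform
vanishes for all frequencies `|λ| < ε` vanishes almost everywhere. -/
theorem fourier_vanishing_small_freq
    (f : ℝ → ℂ) (hf : Integrable f) (hsupp : HasCompactSupport f)
    (ε : ℝ) (hε : 0 < ε)
    (hvanish : ∀ lam : ℝ, |lam| < ε →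
      (∫ t : ℝ, Complex.exp (-(Complex.I * lam * t)) * f t) = 0) :
    f =ᵐ[volume] 0 := by
  have hzero : fourierLaplace f = 0 :=
    (differentiable_fourierLaplace hf hsupp).eq_zero_of_forall_abs_lt hε hvanish
  refine hf.ae_eq_zero_of_fourier_eq_zero (funext fun w ↦ ?_)
  rw [Real.fourier_eq_fourierLaplace, hzero, Pi.zero_apply, Pi.zero_apply]
end

section
/- Let n ≥ 1, let φ : ℝⁿ → ℝ, c : ℝⁿ → ℝ, α, q : ℝ × ℝⁿ → ℝ, and a : ℝ × ℝⁿ → ℂ all be smooth, and let ρ ∈ ℝ. Define the operator P acting on smooth v : ℝ × ℝⁿ → ℂ by P v = ∂ₜ³v + α ∂ₜ²v − Δ(∂ₜ v) − c² Δv + q ∂ₜ v, where Δw = Σ_{i=1}^n ∂²w/∂x_i² is the spatial Laplacian and ∇φ·∇w = Σ_{i=1}^n (∂φ/∂x_i)(∂w/∂x_i). Define T₃a = (1 − |∇φ|²) a, T₂a = (3 − |∇φ|²) ∂ₜa − 2 ∇φ·∇a − ( Δφ + c² |∇φ|² − α ) a, and T₁a = 3 ∂ₜ²a + (2α − Δφ)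 ∂ₜa − 2 ∇φ·∇(∂ₜa) − Δa − c² (Δφ) a − 2 c² ∇φ·∇a + q a. Then for v_ρ(t,x) = e^{iρ(t+φ(x))} a(t,x), one has P v_ρ = e^{iρ(t+φ)} ( −iρ³ T₃ a − ρ² T₂ a + iρ T₁ a + P a ) at every point of ℝ × ℝⁿ. -/
open MeasureTheory

/-- Partial derivative in the time variable of a function on `ℝ × ℝⁿ`. -/
noncomputable def pdt {E : Type*} [NormedAddCommGroup E] [NormedSpace ℝ E]
    {n : ℕ} (v : ℝ × (Fin n → ℝ) → E) : ℝ × (Fin n → ℝ) → E :=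
  fun p => deriv (fun t => v (t, p.2)) p.1

/-- Partial derivative in the `i`-th spatial variable of a function on `ℝ × ℝⁿ`. -/
noncomputable def pdx {E : Type*} [NormedAddCommGroup E] [NormedSpace ℝ E]
    {n : ℕ} (i : Fin n) (v : ℝ × (Fin n → ℝ) → E) : ℝ × (Fin n → ℝ) → E :=
  fun p => deriv (fun y => v (p.1, Function.update p.2 i y)) (p.2 i)

/-- Spatial Laplacian `Δw = Σᵢ ∂²w/∂xᵢ²` of a function on `ℝ × ℝⁿ`. -/
noncomputable def lapx {E : Type*} [NormedAddCommGroup E] [NormedSpace ℝ E]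
    {n : ℕ} (v : ℝ × (Fin n → ℝ) → E) : ℝ × (Fin n → ℝ) → E :=
  fun p => ∑ i, pdx i (pdx i v) p

/-- The linearized MGT operator `P v = ∂ₜ³v + α ∂ₜ²v − Δ∂ₜv − c²Δv + q ∂ₜv`. -/
noncomputable def Pop {n : ℕ} (α q : ℝ × (Fin n → ℝ) → ℝ) (c : (Fin n → ℝ) → ℝ)
    (v : ℝ × (Fin n → ℝ) → ℂ) : ℝ × (Fin n → ℝ) → ℂ :=
  fun p => pdt (pdt (pdt v)) p + (α p : ℂ) * pdt (pdt v) p - lapx (pdt v) p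
    - ((c p.2 : ℂ)) ^ 2 * lapx v p + (q p : ℂ) * pdt v p


section WKBAux

variable {n : ℕ}

private lemma diffAt_lineT {F : Type*} [NormedAddCommGroup F] [NormedSpace ℝ F]
    {v : ℝ × (Fin n → ℝ) → F} (hv : ContDiff ℝ (⊤ : ℕ∞) v) (p : ℝ × (Fin n → ℝ)) :
    DifferentiableAt ℝ (fun t => v (t, p.2)) p.1 :=
  (hv.differentiable (by simp) _).comp p.1
    (differentiableAt_id.prodMk (differentiableAt_const _))

private lemma diffAt_lineX {F : Type*} [NormedAddCommGroup F] [NormedSpace ℝ F]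
    {v : ℝ × (Fin n → ℝ) → F} (hv : ContDiff ℝ (⊤ : ℕ∞) v) (i : Fin n) (p : ℝ × (Fin n → ℝ)) :
    DifferentiableAt ℝ (fun y => v (p.1, Function.update p.2 i y)) (p.2 i) :=
  (hv.differentiable (by simp) _).comp (p.2 i)
    ((differentiableAt_const _).prodMk (hasDerivAt_update p.2 i (p.2 i)).differentiableAt)

private lemma hasDerivAt_lineT {F : Type*} [NormedAddCommGroup F] [NormedSpace ℝ F]
    {v : ℝ × (Fin n → ℝ) → F} (hv : ContDiff ℝ (⊤ : ℕ∞) v) (p : ℝ × (Fin n → ℝ)) :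
    HasDerivAt (fun t => v (t, p.2)) (pdt v p) p.1 :=
  (diffAt_lineT hv p).hasDerivAt

private lemma hasDerivAt_lineX {F : Type*} [NormedAddCommGroup F] [NormedSpace ℝ F]
    {v : ℝ × (Fin n → ℝ) → F} (hv : ContDiff ℝ (⊤ : ℕ∞) v) (i : Fin n) (p : ℝ × (Fin n → ℝ)) :
    HasDerivAt (fun y => v (p.1, Function.update p.2 i y)) (pdx i v p) (p.2 i) :=
  (diffAt_lineX hv i p).hasDerivAt

private lemma contDiff_pdt {F : Type*} [NormedAddCommGroup F] [NormedSpace ℝ F]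
    {v : ℝ × (Fin n → ℝ) → F} (hv : ContDiff ℝ (⊤ : ℕ∞) v) : ContDiff ℝ (⊤ : ℕ∞) (pdt v) := by
  have hrep : pdt v = fun p => fderiv ℝ v p (1, 0) := by
    funext p
    have hc : HasDerivAt (fun t : ℝ => (t, p.2)) ((1 : ℝ), (0 : Fin n → ℝ)) p.1 :=
      (hasDerivAt_id p.1).prodMk (hasDerivAt_const p.1 p.2)
    have h := ((hv.differentiable (by simp) (p.1, p.2)).hasFDerivAt).comp_hasDerivAt p.1 hc
    show deriv (fun t => v (t, p.2)) p.1 = fderiv ℝ v p (1, 0)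
    have h' := h.deriv
    simp at h'
    exact h'
  rw [hrep]
  exact (hv.fderiv_right (by simp)).clm_apply contDiff_const

private lemma contDiff_pdx {F : Type*} [NormedAddCommGroup F] [NormedSpace ℝ F]
    {v : ℝ × (Fin n → ℝ) → F} (hv : ContDiff ℝ (⊤ : ℕ∞) v) (i : Fin n) :
    ContDiff ℝ (⊤ : ℕ∞) (pdx i v) := by
  have hrep : pdx i v = fun p => fderiv ℝ v p ((0 : ℝ), Pi.single i (1 : ℝ)) := by
    funext p
    have hc : HasDerivAt (fun y : ℝ => (p.1, Function.update p.2 i y))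
        ((0 : ℝ), Pi.single i (1 : ℝ)) (p.2 i) :=
      (hasDerivAt_const _ _).prodMk (hasDerivAt_update p.2 i (p.2 i))
    have h := ((hv.differentiable (by simp) _).hasFDerivAt).comp_hasDerivAt (p.2 i) hc
    show deriv (fun y => v (p.1, Function.update p.2 i y)) (p.2 i)
      = fderiv ℝ v p ((0 : ℝ), Pi.single i (1 : ℝ))
    have h' := h.deriv
    simp [Function.update_eq_self] at h'
    exact h'
  rw [hrep]
  exact (hv.fderiv_right (by simp)).clm_apply contDiff_const

private lemma pdt_add' {u v : ℝ × (Fin n → ℝ) → ℂ}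
    (hu : ContDiff ℝ (⊤ : ℕ∞) u) (hv : ContDiff ℝ (⊤ : ℕ∞) v) (p : ℝ × (Fin n → ℝ)) :
    pdt (fun q => u q + v q) p = pdt u p + pdt v p :=
  ((hasDerivAt_lineT hu p).add (hasDerivAt_lineT hv p)).deriv

private lemma pdt_cmul {v : ℝ × (Fin n → ℝ) → ℂ} (k : ℂ)
    (hv : ContDiff ℝ (⊤ : ℕ∞) v) (p : ℝ × (Fin n → ℝ)) :
    pdt (fun q => k * v q) p = k * pdt v p :=
  ((hasDerivAt_lineT hv p).const_mul k).deriv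

private lemma pdx_add' {u v : ℝ × (Fin n → ℝ) → ℂ}
    (hu : ContDiff ℝ (⊤ : ℕ∞) u) (hv : ContDiff ℝ (⊤ : ℕ∞) v) (i : Fin n) (p : ℝ × (Fin n → ℝ)) :
    pdx i (fun q => u q + v q) p = pdx i u p + pdx i v p :=
  ((hasDerivAt_lineX hu i p).add (hasDerivAt_lineX hv i p)).deriv

private lemma pdx_cmul {v : ℝ × (Fin n → ℝ) → ℂ} (k : ℂ)
    (hv : ContDiff ℝ (⊤ : ℕ∞) v) (i : Fin n) (p : ℝ × (Fin n → ℝ)) :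
    pdx i (fun q => k * v q) p = k * pdx i v p :=
  ((hasDerivAt_lineX hv i p).const_mul k).deriv

private lemma pdx_mul' {u v : ℝ × (Fin n → ℝ) → ℂ}
    (hu : ContDiff ℝ (⊤ : ℕ∞) u) (hv : ContDiff ℝ (⊤ : ℕ∞) v) (i : Fin n) (p : ℝ × (Fin n → ℝ)) :
    pdx i (fun q => u q * v q) p = pdx i u p * v p + u p * pdx i v p := by
  have h := ((hasDerivAt_lineX hu i p).fun_mul (hasDerivAt_lineX hv i p)).deriv
  simp [Function.update_eq_self] at h
  exact h

private lemma pdx_ofReal' {f : ℝ × (Fin n → ℝ) → ℝ}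
    (hf : ContDiff ℝ (⊤ : ℕ∞) f) (i : Fin n) (p : ℝ × (Fin n → ℝ)) :
    pdx i (fun q => ((f q : ℝ) : ℂ)) p = ((pdx i f p : ℝ) : ℂ) :=
  ((hasDerivAt_lineX hf i p).ofReal_comp).deriv

end WKBAux
section WKBExp

variable {n : ℕ}

private lemma pdt_exp_mul (φ : (Fin n → ℝ) → ℝ) (ρ : ℝ)
    {b : ℝ × (Fin n → ℝ) → ℂ} (hb : ContDiff ℝ (⊤ : ℕ∞) b) :
    pdt (fun p : ℝ × (Fin n → ℝ) => Complex.exp (Complex.I * ρ * (p.1 + φ p.2)) * b p)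
      = fun p => Complex.exp (Complex.I * ρ * (p.1 + φ p.2))
          * (Complex.I * ρ * b p + pdt b p) := by
  funext p
  have h1 : HasDerivAt (fun t : ℝ => Complex.I * ρ * ((t : ℂ) + (φ p.2 : ℂ)))
      (Complex.I * ρ) p.1 := by
    simpa using (((hasDerivAt_id p.1).ofReal_comp).add_const ((φ p.2 : ℂ))).const_mul
      (Complex.I * ρ)
  have h3 := (h1.cexp.fun_mul (hasDerivAt_lineT hb p)).deriv
  show deriv (fun t : ℝ =>
      Complex.exp (Complex.I * ρ * ((t : ℂ) + (φ p.2 : ℂ))) * b (t, p.2)) p.1 = _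
  rw [h3]
  simp only [Prod.mk.eta]
  ring

private lemma pdx_exp_mul (φ : (Fin n → ℝ) → ℝ) (hφ : ContDiff ℝ (⊤ : ℕ∞) φ) (ρ : ℝ) (i : Fin n)
    {b : ℝ × (Fin n → ℝ) → ℂ} (hb : ContDiff ℝ (⊤ : ℕ∞) b) :
    pdx i (fun p : ℝ × (Fin n → ℝ) => Complex.exp (Complex.I * ρ * (p.1 + φ p.2)) * b p)
      = fun p => Complex.exp (Complex.I * ρ * (p.1 + φ p.2))
          * (Complex.I * ρ * ((pdx i (fun p : ℝ × (Fin n → ℝ) => φ p.2) p : ℝ) : ℂ) * b p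
              + pdx i b p) := by
  funext p
  have hφs : ContDiff ℝ (⊤ : ℕ∞) (fun p : ℝ × (Fin n → ℝ) => φ p.2) := hφ.comp contDiff_snd
  have hg : HasDerivAt (fun y => φ (Function.update p.2 i y))
      (pdx i (fun p : ℝ × (Fin n → ℝ) => φ p.2) p) (p.2 i) :=
    hasDerivAt_lineX hφs i p
  have h1 : HasDerivAt
      (fun y : ℝ => Complex.I * ρ * ((p.1 : ℂ) + ((φ (Function.update p.2 i y) : ℝ) : ℂ)))
      (Complex.I * ρ * ((pdx i (fun p : ℝ × (Fin n → ℝ) => φ p.2) p : ℝ) : ℂ)) (p.2 i) := by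
    simpa using ((hg.ofReal_comp).const_add ((p.1 : ℂ))).const_mul (Complex.I * ρ)
  have h3 := (h1.cexp.fun_mul (hasDerivAt_lineX hb i p)).deriv
  show deriv (fun y : ℝ =>
      Complex.exp (Complex.I * ρ * ((p.1 : ℂ) + ((φ (Function.update p.2 i y) : ℝ) : ℂ)))
        * b (p.1, Function.update p.2 i y)) (p.2 i) = _
  rw [h3]
  simp only [Function.update_eq_self, Prod.mk.eta]
  ring

end WKBExp
section WKBLap

variable {n : ℕ}

private lemma lapx_exp_mul (φ : (Fin n → ℝ) → ℝ) (hφ : ContDiff ℝ (⊤ : ℕ∞) φ) (ρ : ℝ)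
    {b : ℝ × (Fin n → ℝ) → ℂ} (hb : ContDiff ℝ (⊤ : ℕ∞) b) (p : ℝ × (Fin n → ℝ)) :
    lapx (fun p : ℝ × (Fin n → ℝ) => Complex.exp (Complex.I * ρ * (p.1 + φ p.2)) * b p) p
      = Complex.exp (Complex.I * ρ * (p.1 + φ p.2)) *
          ((Complex.I * ρ) ^ 2
              * (∑ i, ((pdx i (fun p : ℝ × (Fin n → ℝ) => φ p.2) p : ℝ) : ℂ) ^ 2) * b p
            + 2 * (Complex.I * ρ)
              * (∑ i, ((pdx i (fun p : ℝ × (Fin n → ℝ) => φ p.2) p : ℝ) : ℂ) * pdx i b p)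
            + (Complex.I * ρ)
              * (∑ i, ((pdx i (pdx i (fun p : ℝ × (Fin n → ℝ) => φ p.2)) p : ℝ) : ℂ)) * b p
            + ∑ i, pdx i (pdx i b) p) := by
  have hφs : ContDiff ℝ (⊤ : ℕ∞) (fun p : ℝ × (Fin n → ℝ) => φ p.2) := hφ.comp contDiff_snd
  have key : ∀ i, pdx i (pdx i
        (fun p : ℝ × (Fin n → ℝ) => Complex.exp (Complex.I * ρ * (p.1 + φ p.2)) * b p)) p
      = Complex.exp (Complex.I * ρ * (p.1 + φ p.2)) *
          ((Complex.I * ρ) ^ 2 * ((pdx i (fun p : ℝ × (Fin n → ℝ) => φ p.2) p : ℝ) : ℂ) ^ 2 * b p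
            + 2 * (Complex.I * ρ)
              * (((pdx i (fun p : ℝ × (Fin n → ℝ) => φ p.2) p : ℝ) : ℂ) * pdx i b p)
            + (Complex.I * ρ) * ((pdx i (pdx i (fun p : ℝ × (Fin n → ℝ) => φ p.2)) p : ℝ) : ℂ) * b p
            + pdx i (pdx i b) p) := by
    intro i
    have hΦ : ContDiff ℝ (⊤ : ℕ∞) (fun q : ℝ × (Fin n → ℝ) =>
        ((pdx i (fun p : ℝ × (Fin n → ℝ) => φ p.2) q : ℝ) : ℂ)) :=
      Complex.ofRealCLM.contDiff.comp (contDiff_pdx hφs i)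
    have hci : ContDiff ℝ (⊤ : ℕ∞) (fun q : ℝ × (Fin n → ℝ) =>
        Complex.I * ρ * ((pdx i (fun p : ℝ × (Fin n → ℝ) => φ p.2) q : ℝ) : ℂ) * b q
          + pdx i b q) :=
      ((contDiff_const.mul hΦ).mul hb).add (contDiff_pdx hb i)
    rw [pdx_exp_mul φ hφ ρ i hb]
    rw [congrFun (pdx_exp_mul φ hφ ρ i hci) p]
    have h3 : pdx i (fun q : ℝ × (Fin n → ℝ) =>
          Complex.I * ρ * ((pdx i (fun p : ℝ × (Fin n → ℝ) => φ p.2) q : ℝ) : ℂ) * b q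
            + pdx i b q) p
        = (Complex.I * ρ * ((pdx i (pdx i (fun p : ℝ × (Fin n → ℝ) => φ p.2)) p : ℝ) : ℂ)) * b p
          + (Complex.I * ρ * ((pdx i (fun p : ℝ × (Fin n → ℝ) => φ p.2) p : ℝ) : ℂ))
            * pdx i b p
          + pdx i (pdx i b) p := by
      rw [pdx_add' ((contDiff_const.mul hΦ).mul hb) (contDiff_pdx hb i) i p,
        pdx_mul' (contDiff_const.mul hΦ) hb i p,
        pdx_cmul (Complex.I * ρ) hΦ i p,
        pdx_ofReal' (contDiff_pdx hφs i) i p]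
    rw [h3]
    ring
  show (∑ i, pdx i (pdx i
      (fun p : ℝ × (Fin n → ℝ) => Complex.exp (Complex.I * ρ * (p.1 + φ p.2)) * b p)) p) = _
  rw [Finset.sum_congr rfl (fun i _ => key i), ← Finset.mul_sum]
  congr 1
  simp only [Finset.sum_add_distrib, ← Finset.sum_mul, ← Finset.mul_sum]

end WKBLap
/-- The WKB expansion identity
`P(e^{iρ(t+φ)} a) = e^{iρ(t+φ)} (−iρ³ T₃a − ρ² T₂a + iρ T₁a + Pa)`. -/
theorem wkb_expansion
    (n : ℕ) (hn : 1 ≤ n)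
    (φ : (Fin n → ℝ) → ℝ) (c : (Fin n → ℝ) → ℝ)
    (α q : ℝ × (Fin n → ℝ) → ℝ) (a : ℝ × (Fin n → ℝ) → ℂ)
    (hφ : ContDiff ℝ (⊤ : ℕ∞) φ) (hc : ContDiff ℝ (⊤ : ℕ∞) c)
    (hα : ContDiff ℝ (⊤ : ℕ∞) α) (hq : ContDiff ℝ (⊤ : ℕ∞) q) (ha : ContDiff ℝ (⊤ : ℕ∞) a)
    (ρ : ℝ)
    (T₃a T₂a T₁a : ℝ × (Fin n → ℝ) → ℂ)
    (hT₃ : ∀ p, T₃a p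
      = ((1 - ∑ i, (pdx i (fun p : ℝ × (Fin n → ℝ) => φ p.2) p) ^ 2 : ℝ) : ℂ) * a p)
    (hT₂ : ∀ p, T₂a p
      = ((3 - ∑ i, (pdx i (fun p : ℝ × (Fin n → ℝ) => φ p.2) p) ^ 2 : ℝ) : ℂ) * pdt a p
        - 2 * ∑ i, ((pdx i (fun p : ℝ × (Fin n → ℝ) => φ p.2) p : ℂ)) * pdx i a p
        - ((lapx (fun p : ℝ × (Fin n → ℝ) => φ p.2) p
            + (c p.2) ^ 2 * ∑ i, (pdx i (fun p : ℝ × (Fin n → ℝ) => φ p.2) p) ^ 2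
            - α p : ℝ) : ℂ) * a p)
    (hT₁ : ∀ p, T₁a p
      = 3 * pdt (pdt a) p
        + ((2 * α p - lapx (fun p : ℝ × (Fin n → ℝ) => φ p.2) p : ℝ) : ℂ) * pdt a p
        - 2 * ∑ i, ((pdx i (fun p : ℝ × (Fin n → ℝ) => φ p.2) p : ℂ)) * pdx i (pdt a) p
        - lapx a p
        - ((c p.2) ^ 2 : ℝ) * ((lapx (fun p : ℝ × (Fin n → ℝ) => φ p.2) p : ℝ) : ℂ) * a p
        - 2 * ((c p.2) ^ 2 : ℝ)
            * ∑ i, ((pdx i (fun p : ℝ × (Fin n → ℝ) => φ p.2) p : ℂ)) * pdx i a p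
        + (q p : ℂ) * a p) :
    ∀ p : ℝ × (Fin n → ℝ),
      Pop α q c (fun p => Complex.exp (Complex.I * ρ * (p.1 + φ p.2)) * a p) p
        = Complex.exp (Complex.I * ρ * (p.1 + φ p.2))
            * (-(Complex.I * (ρ : ℂ) ^ 3) * T₃a p - ((ρ : ℂ)) ^ 2 * T₂a p
              + Complex.I * ρ * T₁a p + Pop α q c a p) := by
  intro p
  have hφs : ContDiff ℝ (⊤ : ℕ∞) (fun p : ℝ × (Fin n → ℝ) => φ p.2) := hφ.comp contDiff_snd
  have ha1 : ContDiff ℝ (⊤ : ℕ∞) (pdt a) := contDiff_pdt ha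
  have ha2 : ContDiff ℝ (⊤ : ℕ∞) (pdt (pdt a)) := contDiff_pdt ha1
  have hb1 : ContDiff ℝ (⊤ : ℕ∞) (fun q : ℝ × (Fin n → ℝ) => Complex.I * ρ * a q + pdt a q) :=
    (contDiff_const.mul ha).add ha1
  have hb2 : ContDiff ℝ (⊤ : ℕ∞) (fun q : ℝ × (Fin n → ℝ) =>
      (Complex.I * ρ) ^ 2 * a q + 2 * (Complex.I * ρ) * pdt a q + pdt (pdt a) q) :=
    ((contDiff_const.mul ha).add (contDiff_const.mul ha1)).add ha2
  have e1 : pdt (fun p : ℝ × (Fin n → ℝ) =>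
        Complex.exp (Complex.I * ρ * (p.1 + φ p.2)) * a p)
      = fun q => Complex.exp (Complex.I * ρ * (q.1 + φ q.2))
          * (Complex.I * ρ * a q + pdt a q) :=
    pdt_exp_mul φ ρ ha
  have e2 : pdt (fun q : ℝ × (Fin n → ℝ) => Complex.exp (Complex.I * ρ * (q.1 + φ q.2))
        * (Complex.I * ρ * a q + pdt a q))
      = fun q => Complex.exp (Complex.I * ρ * (q.1 + φ q.2)) *
          ((Complex.I * ρ) ^ 2 * a q + 2 * (Complex.I * ρ) * pdt a q + pdt (pdt a) q) := by
    rw [pdt_exp_mul φ ρ hb1]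
    funext q
    rw [pdt_add' (contDiff_const.mul ha) ha1 q, pdt_cmul (Complex.I * ρ) ha q]
    ring
  have e3 : pdt (fun q : ℝ × (Fin n → ℝ) => Complex.exp (Complex.I * ρ * (q.1 + φ q.2))
        * ((Complex.I * ρ) ^ 2 * a q + 2 * (Complex.I * ρ) * pdt a q + pdt (pdt a) q))
      = fun q => Complex.exp (Complex.I * ρ * (q.1 + φ q.2)) *
          ((Complex.I * ρ) ^ 3 * a q + 3 * (Complex.I * ρ) ^ 2 * pdt a q
            + 3 * (Complex.I * ρ) * pdt (pdt a) q + pdt (pdt (pdt a)) q) := by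
    rw [pdt_exp_mul φ ρ hb2]
    funext q
    rw [pdt_add' ((contDiff_const.mul ha).add (contDiff_const.mul ha1)) ha2 q,
      pdt_add' (contDiff_const.mul ha) (contDiff_const.mul ha1) q,
      pdt_cmul ((Complex.I * ρ) ^ 2) ha q, pdt_cmul (2 * (Complex.I * ρ)) ha1 q]
    ring
  have x1 : ∀ i : Fin n, pdx i (fun q : ℝ × (Fin n → ℝ) => Complex.I * ρ * a q + pdt a q)
      = fun q => Complex.I * ρ * pdx i a q + pdx i (pdt a) q := fun i => funext fun q => by
    rw [pdx_add' (contDiff_const.mul ha) ha1 i q, pdx_cmul (Complex.I * ρ) ha i q]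
  have x2 : ∀ i : Fin n,
      pdx i (fun q : ℝ × (Fin n → ℝ) => Complex.I * ρ * pdx i a q + pdx i (pdt a) q)
      = fun q => Complex.I * ρ * pdx i (pdx i a) q + pdx i (pdx i (pdt a)) q :=
    fun i => funext fun q => by
    rw [pdx_add' (contDiff_const.mul (contDiff_pdx ha i)) (contDiff_pdx ha1 i) i q,
      pdx_cmul (Complex.I * ρ) (contDiff_pdx ha i) i q]
  have hcast : ∀ (i : Fin n) (r : ℝ × (Fin n → ℝ)),
      pdx i (fun p : ℝ × (Fin n → ℝ) => ((φ p.2 : ℝ) : ℂ)) r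
        = ((pdx i (fun p : ℝ × (Fin n → ℝ) => φ p.2) r : ℝ) : ℂ) :=
    fun i r => pdx_ofReal' hφs i r
  have s1 : (∑ i, ((pdx i (fun p : ℝ × (Fin n → ℝ) => φ p.2) p : ℝ) : ℂ)
        * (Complex.I * ρ * pdx i a p + pdx i (pdt a) p))
      = Complex.I * ρ * (∑ i, ((pdx i (fun p : ℝ × (Fin n → ℝ) => φ p.2) p : ℝ) : ℂ)
          * pdx i a p)
        + ∑ i, ((pdx i (fun p : ℝ × (Fin n → ℝ) => φ p.2) p : ℝ) : ℂ) * pdx i (pdt a) p := by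
    rw [Finset.mul_sum, ← Finset.sum_add_distrib]
    exact Finset.sum_congr rfl fun i _ => by ring
  have s2 : (∑ i, (Complex.I * ρ * pdx i (pdx i a) p + pdx i (pdx i (pdt a)) p))
      = Complex.I * ρ * (∑ i, pdx i (pdx i a) p) + ∑ i, pdx i (pdx i (pdt a)) p := by
    rw [Finset.mul_sum, ← Finset.sum_add_distrib]
  simp only [Pop]
  rw [e1, e2, e3]
  rw [lapx_exp_mul φ hφ ρ hb1 p, lapx_exp_mul φ hφ ρ ha p]
  rw [hT₃ p, hT₂ p, hT₁ p]
  simp only [lapx, hcast, x1, x2]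
  rw [s1, s2]
  rw [show -(Complex.I * (ρ : ℂ) ^ 3) = (Complex.I * (ρ : ℂ)) ^ 3 by
      linear_combination (-Complex.I * (ρ : ℂ) ^ 3) * Complex.I_sq,
    show ((ρ : ℂ)) ^ 2 = -((Complex.I * (ρ : ℂ)) ^ 2) by
      linear_combination ((ρ : ℂ) ^ 2) * Complex.I_sq]
  push_cast
  ring
end
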